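/- Let Q, X₁₁, X₂₁, X₃₁ be finite-valued random variables such that X₁₁, X₂₁, X₃₁ are mutually conditionally independent given Q. Let S₁ = h(X₂₁, X₃₁) where h is one-to-one in each argument, and let Y₁ = f(X₁₁, S₁) where f is one-to-one in each argument. Then H(Y₁|X₃₁,Q) − H(X₂₁|Q) ≥ H(Y₁|Q) − H(S₁|Q). -/

import Mathlib

open scoped Classical
open Finset

/-- A probability mass function on a finite sample space, given as a real-valued
weight function that is nonnegative and sums to one. -/
structure FinPMF (Ω : Type) where
  [fin : Fintype Ω]
  p : Ω → ℝ
  nonneg : ∀ ω, 0 ≤ p ω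
  sum_one : ∑ ω, p ω = 1

/-- Probability of an event. -/
noncomputable def prE {Ω : Type} (μ : FinPMF Ω) (E : Ω → Prop) : ℝ :=
  letI := μ.fin
  ∑ ω, if E ω then μ.p ω else 0

/-- Probability that the random variable `X` takes the value `x`. -/
noncomputable def prX {Ω α : Type} (μ : FinPMF Ω) (X : Ω → α) (x : α) : ℝ :=
  prE μ (fun ω => X ω = x)

/-- Shannon entropy (base 2) of a random variable on a finite probability space. -/
noncomputable def entH {Ω α : Type} (μ : FinPMF Ω) (X : Ω → α) : ℝ :=
  letI := μ.fin;
  -∑ x ∈ Finset.univ.image X, prX μ X x * Real.logb 2 (prX μ X x)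

/-- Conditional entropy `H(X | Y)` (base 2). -/
noncomputable def condH {Ω α β : Type} (μ : FinPMF Ω) (X : Ω → α) (Y : Ω → β) : ℝ :=
  entH μ (fun ω => (X ω, Y ω)) - entH μ Y

/-- Conditional mutual information `I(X ; Y | Q)` (base 2). -/
noncomputable def condMI {Ω α β γ : Type} (μ : FinPMF Ω) (X : Ω → α) (Y : Ω → β)
    (Q : Ω → γ) : ℝ :=
  condH μ X Q + condH μ Y Q - condH μ (fun ω => (X ω, Y ω)) Q

/-- A two-argument function is one-to-one in each argument. -/
def OneToOne {A B C : Type} (f : A → B → C) : Prop :=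
  (∀ b, Function.Injective fun a => f a b) ∧ ∀ a, Function.Injective (f a)

/-- Conditional pmf `p_{X|U}(x|u)`. -/
noncomputable def condP {Ω α γ : Type} (μ : FinPMF Ω) (X : Ω → α) (U : Ω → γ)
    (x : α) (u : γ) : ℝ :=
  prE μ (fun ω => X ω = x ∧ U ω = u) / prX μ U u

/-- Independence of two random variables. -/
def IndepFun {Ω α β : Type} (μ : FinPMF Ω) (X : Ω → α) (S : Ω → β) : Prop :=
  ∀ x s, prE μ (fun ω => X ω = x ∧ S ω = s) = prX μ X x * prX μ S s

/-- Conditional independence of `A` and `B` given `Z`: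
for every `z` with `P(Z = z) > 0`, `P(A = a, B = b | Z = z) = P(A = a | Z = z) P(B = b | Z = z)`. -/
def CondIndepFun {Ω α β γ : Type} (μ : FinPMF Ω) (A : Ω → α) (B : Ω → β) (Z : Ω → γ) : Prop :=
  ∀ a b z, 0 < prX μ Z z →
    prE μ (fun ω => A ω = a ∧ B ω = b ∧ Z ω = z) / prX μ Z z =
      (prE μ (fun ω => A ω = a ∧ Z ω = z) / prX μ Z z) *
        (prE μ (fun ω => B ω = b ∧ Z ω = z) / prX μ Z z)

/-- Mutual conditional independence of `X₁, X₂, X₃` given `Q`: the joint conditional pmf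
factors into the product of the conditional marginals. -/
def CondIndepFun3 {Ω α₁ α₂ α₃ γ : Type} (μ : FinPMF Ω)
    (X₁ : Ω → α₁) (X₂ : Ω → α₂) (X₃ : Ω → α₃) (Q : Ω → γ) : Prop :=
  ∀ x₁ x₂ x₃ q, 0 < prX μ Q q →
    prE μ (fun ω => X₁ ω = x₁ ∧ X₂ ω = x₂ ∧ X₃ ω = x₃ ∧ Q ω = q) / prX μ Q q =
      (prE μ (fun ω => X₁ ω = x₁ ∧ Q ω = q) / prX μ Q q) *
        (prE μ (fun ω => X₂ ω = x₂ ∧ Q ω = q) / prX μ Q q) *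
        (prE μ (fun ω => X₃ ω = x₃ ∧ Q ω = q) / prX μ Q q)

/-- The ε-typical set (sequences whose empirical pmf is within a relative ε of `p`). -/
def Typical {𝒳 : Type} [Fintype 𝒳] (p : 𝒳 → ℝ) (ε : ℝ) (n : ℕ) (xs : Fin n → 𝒳) : Prop :=
  ∀ x : 𝒳, |((Finset.univ.filter fun i => xs i = x).card : ℝ) / n - p x| ≤ ε * p x

/-- The number of codewords `⌈2^{nR}⌉` at rate `R` and blocklength `n`. -/
noncomputable def codeSize (R : ℝ) (n : ℕ) : ℕ := ⌈(2 : ℝ) ^ ((n : ℝ) * R)⌉₊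

/-!
Write `S = h(X₂₁, X₃₁)` and `Y = f(X₁₁, S)`; the claim says `I(Y; X₃₁ | Q) ≤ H(S|Q) − H(X₂₁|Q)`.
Since `Y` is a function of `(X₁₁, S)`, data processing gives
`I(Y; X₃₁ | Q) ≤ I(X₁₁, S; X₃₁ | Q) = I(S; X₃₁ | Q) + I(X₁₁; X₃₁ | S, Q)`, and the last term
vanishes because `X₁₁` is conditionally independent of `(X₂₁, X₃₁)`, hence of `(X₃₁, S)`, given `Q`.
Once `X₃₁` is known, `S` and `X₂₁` determine each other, and `X₂₁` is conditionally independent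
of `X₃₁` given `Q`, so `I(S; X₃₁ | Q) = H(S|Q) − H(X₂₁|X₃₁, Q) = H(S|Q) − H(X₂₁|Q)`.
Every information inequality involved is an instance of submodularity of entropy, which is
Gibbs' inequality for the law of `(A, C, Z)` against `P(A = a, Z = z) P(C = c, Z = z) / P(Z = z)`.
-/

open Real

theorem sum_mul_logb_le_sum_mul_logb {ι : Type*} (s : Finset ι) {b : ℝ} (hb : 1 < b)
    {p q : ι → ℝ} (hp : ∀ i ∈ s, 0 ≤ p i) (hq : ∀ i ∈ s, 0 ≤ q i)
    (hpq : ∀ i ∈ s, 0 < p i → 0 < q i) (hsum : ∑ i ∈ s, q i ≤ ∑ i ∈ s, p i) :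
    ∑ i ∈ s, p i * logb b (q i) ≤ ∑ i ∈ s, p i * logb b (p i) := by
  have hlogb : 0 < log b := log_pos hb
  have pointwise : ∀ i ∈ s, p i * logb b (q i) - p i * logb b (p i) ≤ (q i - p i) / log b := by
    intro i hi
    rcases (hp i hi).eq_or_lt with hzero | hpos
    · rw [← hzero]
      simpa using div_nonneg (hq i hi) hlogb.le
    have hqpos := hpq i hi hpos
    have hlog := log_le_sub_one_of_pos (div_pos hqpos hpos)
    rw [log_div hqpos.ne' hpos.ne'] at hlog
    rw [le_div_iff₀ hlogb, logb, logb]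
    field_simp
    calc p i * (log (q i) - log (p i)) ≤ p i * (q i / p i - 1) := by gcongr
      _ = q i - p i := by field_simp
  have hdiff : ∑ i ∈ s, (q i - p i) / log b ≤ 0 := by
    rw [← Finset.sum_div, Finset.sum_sub_distrib]
    exact div_nonpos_of_nonpos_of_nonneg (by linarith) hlogb.le
  have := (Finset.sum_le_sum pointwise).trans hdiff
  rw [Finset.sum_sub_distrib] at this
  linarith

section Probability

variable {Ω α β γ δ : Type} (μ : FinPMF Ω)

lemma prE_nonneg (E : Ω → Prop) : 0 ≤ prE μ E :=
  letI := μ.fin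
  Finset.sum_nonneg fun ω _ => ite_nonneg (μ.nonneg ω) le_rfl

lemma prE_congr {E F : Ω → Prop} (h : ∀ ω, E ω ↔ F ω) : prE μ E = prE μ F := by
  rw [funext fun ω => propext (h ω)]

lemma prE_mono {E F : Ω → Prop} (h : ∀ ω, E ω → F ω) : prE μ E ≤ prE μ F :=
  letI := μ.fin
  Finset.sum_le_sum fun ω _ => by
    by_cases hE : E ω
    · simp [hE, h ω hE]
    · simpa [hE] using ite_nonneg (μ.nonneg ω) le_rfl

lemma sum_prE_and [Fintype α] (X : Ω → α) (E : Ω → Prop) :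
    ∑ x, prE μ (fun ω => X ω = x ∧ E ω) = prE μ E := by
  let _ := μ.fin
  simp only [prE]
  rw [Finset.sum_comm]
  refine Finset.sum_congr rfl fun ω _ => ?_
  by_cases hE : E ω <;> simp [hE]

lemma prX_nonneg (X : Ω → α) (x : α) : 0 ≤ prX μ X x := prE_nonneg μ _

lemma prX_le_prX_comp (X : Ω → α) (g : α → β) (x : α) :
    prX μ X x ≤ prX μ (fun ω => g (X ω)) (g x) :=
  prE_mono μ fun _ hx => congrArg g hx

lemma prE_eq_zero_of_prX_eq_zero {E : Ω → Prop} {Z : Ω → δ} {z : δ} (hE : ∀ ω, E ω → Z ω = z)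
    (hz : prX μ Z z = 0) : prE μ E = 0 :=
  le_antisymm (hz ▸ prE_mono μ hE) (prE_nonneg μ E)

lemma sum_prX_mul [Fintype α] (X : Ω → α) (φ : α → ℝ) :
    letI := μ.fin
    ∑ x, prX μ X x * φ x = ∑ ω, μ.p ω * φ (X ω) := by
  let _ := μ.fin
  simp only [prX, prE, Finset.sum_mul, ite_mul, zero_mul]
  rw [Finset.sum_comm]
  simp

lemma sum_prX [Fintype α] (X : Ω → α) : ∑ x, prX μ X x = 1 := by
  simpa using (sum_prX_mul μ X 1).trans (by simpa using μ.sum_one)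

lemma sum_prX_mul_comp [Fintype α] [Fintype β] (X : Ω → α) (g : α → β) (φ : β → ℝ) :
    ∑ x, prX μ X x * φ (g x) = ∑ y, prX μ (fun ω => g (X ω)) y * φ y :=
  (sum_prX_mul μ X (φ ∘ g)).trans (sum_prX_mul μ _ φ).symm

lemma sum_prX_pair_left [Fintype α] (A : Ω → α) (Z : Ω → δ) (z : δ) :
    ∑ a, prX μ (fun ω => (A ω, Z ω)) (a, z) = prX μ Z z := by
  simpa only [prX, Prod.mk.injEq] using sum_prE_and μ A (fun ω => Z ω = z)

lemma entH_eq_sum [Fintype α] (X : Ω → α) :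
    entH μ X = -∑ x, prX μ X x * logb 2 (prX μ X x) := by
  let _ := μ.fin
  refine congrArg Neg.neg (Finset.sum_subset (Finset.subset_univ _) fun x _ hx => ?_)
  have : prX μ X x = 0 :=
    Finset.sum_eq_zero fun ω _ =>
      if_neg fun (hω : X ω = x) => hx (hω ▸ Finset.mem_image_of_mem X (Finset.mem_univ ω))
  simp [this]

lemma sum_prX_mul_logb_prX_comp [Fintype α] [Fintype β] (X : Ω → α) (g : α → β) :
    ∑ x, prX μ X x * logb 2 (prX μ (fun ω => g (X ω)) (g x)) = -entH μ (fun ω => g (X ω)) := by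
  rw [sum_prX_mul_comp μ X g (fun y => logb 2 (prX μ (fun ω => g (X ω)) y)), entH_eq_sum, neg_neg]

lemma prX_comp_of_injective {g : α → β} (hg : Function.Injective g) (X : Ω → α) (x : α) :
    prX μ (fun ω => g (X ω)) (g x) = prX μ X x :=
  prE_congr μ fun _ => hg.eq_iff

lemma entH_comp_of_injective {g : α → β} (hg : Function.Injective g) (X : Ω → α) :
    entH μ (fun ω => g (X ω)) = entH μ X := by
  let _ := μ.fin
  have himage : Finset.univ.image (fun ω => g (X ω)) = (Finset.univ.image X).image g := by
    rw [Finset.image_image]; rfl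
  simp only [entH, himage, Finset.sum_image fun a _ b _ hab => hg hab,
    prX_comp_of_injective μ hg]

lemma entH_prod_left_comm (A : Ω → α) (B : Ω → β) (Z : Ω → δ) :
    entH μ (fun ω => (A ω, B ω, Z ω)) = entH μ (fun ω => (B ω, A ω, Z ω)) :=
  entH_comp_of_injective μ (g := fun p : β × α × δ => (p.2.1, p.1, p.2.2))
    (by rintro ⟨_, _, _⟩ ⟨_, _, _⟩ e; simp_all) (fun ω => (B ω, A ω, Z ω))

lemma entH_prod_assoc (A : Ω → α) (B : Ω → β) (Z : Ω → δ) :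
    entH μ (fun ω => ((A ω, B ω), Z ω)) = entH μ (fun ω => (A ω, B ω, Z ω)) :=
  entH_comp_of_injective μ (Equiv.prodAssoc α β δ).symm.injective (fun ω => (A ω, B ω, Z ω))

lemma entH_comp_left_of_injective {f : α → β → γ} (hf : ∀ b, Function.Injective (f · b))
    (X : Ω → α) (S : Ω → β) (Z : Ω → δ) :
    entH μ (fun ω => (S ω, f (X ω) (S ω), Z ω)) = entH μ (fun ω => (X ω, S ω, Z ω)) :=
  entH_comp_of_injective μ (g := fun p : α × β × δ => (p.2.1, f p.1 p.2.1, p.2.2))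
    (by
      rintro ⟨a, b, z⟩ ⟨a', b', z'⟩ e
      simp only [Prod.mk.injEq] at e
      obtain ⟨rfl, e, rfl⟩ := e
      rw [hf b e])
    (fun ω => (X ω, S ω, Z ω))

theorem condIndepFun_iff (A : Ω → α) (B : Ω → β) (Z : Ω → δ) :
    CondIndepFun μ A B Z ↔ ∀ a b z, prE μ (fun ω => A ω = a ∧ B ω = b ∧ Z ω = z) * prX μ Z z =
      prE μ (fun ω => A ω = a ∧ Z ω = z) * prE μ (fun ω => B ω = b ∧ Z ω = z) := by
  refine ⟨fun h a b z => ?_, fun h a b z hz => ?_⟩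
  · rcases (prX_nonneg μ Z z).eq_or_lt with hz | hz
    · rw [← hz, mul_zero, prE_eq_zero_of_prX_eq_zero μ (fun _ hω => hω.2) hz.symm, zero_mul]
    have := h a b z hz
    field_simp at this
    linear_combination this
  · field_simp
    linear_combination h a b z

section CondProd

variable (A : Ω → α) (C : Ω → γ) (Z : Ω → δ)

noncomputable def condProdPMF (x : α × γ × δ) : ℝ :=
  prX μ (fun ω => (A ω, Z ω)) (x.1, x.2.2) * prX μ (fun ω => (C ω, Z ω)) x.2 / prX μ Z x.2.2

lemma marginals_pos_of_prX_pos {x : α × γ × δ} (hx : 0 < prX μ (fun ω => (A ω, C ω, Z ω)) x) :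
    0 < prX μ (fun ω => (A ω, Z ω)) (x.1, x.2.2) ∧ 0 < prX μ (fun ω => (C ω, Z ω)) x.2 ∧
      0 < prX μ Z x.2.2 :=
  ⟨hx.trans_le (prX_le_prX_comp μ _ (fun x => (x.1, x.2.2)) x),
    hx.trans_le (prX_le_prX_comp μ _ Prod.snd x),
    hx.trans_le (prX_le_prX_comp μ _ (fun x => x.2.2) x)⟩

variable {μ A C Z} in
lemma CondIndepFun.prX_eq_condProdPMF (h : CondIndepFun μ A C Z) :
    prX μ (fun ω => (A ω, C ω, Z ω)) = condProdPMF μ A C Z := by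
  funext ⟨a, c, z⟩
  have hfac := (condIndepFun_iff μ A C Z).1 h a c z
  rw [condProdPMF]
  rcases (prX_nonneg μ Z z).eq_or_lt with hz | hz
  · rw [← hz, div_zero]
    exact prE_eq_zero_of_prX_eq_zero μ
      (fun _ hω => (Prod.ext_iff.1 (Prod.ext_iff.1 hω).2).2) hz.symm
  · simp only [prX, Prod.mk.injEq] at hfac ⊢
    exact (eq_div_iff hz.ne').2 hfac

variable [Fintype α] [Fintype γ] [Fintype δ]

lemma sum_condProdPMF : ∑ x, condProdPMF μ A C Z x = 1 := by
  have hfiber : ∀ c z, prX μ Z z * prX μ (fun ω => (C ω, Z ω)) (c, z) / prX μ Z z =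
      prX μ (fun ω => (C ω, Z ω)) (c, z) := by
    intro c z
    rcases (prX_nonneg μ Z z).eq_or_lt with hz | hz
    · have : prX μ (fun ω => (C ω, Z ω)) (c, z) = 0 :=
        le_antisymm (hz ▸ prX_le_prX_comp μ _ Prod.snd (c, z)) (prX_nonneg μ _ _)
      simp [this]
    · field_simp
  simp only [condProdPMF, Fintype.sum_prod_type]
  rw [Finset.sum_comm]
  refine (Finset.sum_congr rfl fun c _ => Finset.sum_comm).trans ?_
  simp only [← Finset.sum_div, ← Finset.sum_mul, sum_prX_pair_left, hfiber]
  rw [← Fintype.sum_prod_type' (fun c z => prX μ (fun ω => (C ω, Z ω)) (c, z))]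
  exact sum_prX μ _

lemma sum_prX_mul_logb_condProdPMF :
    ∑ x, prX μ (fun ω => (A ω, C ω, Z ω)) x * logb 2 (condProdPMF μ A C Z x) =
      entH μ Z - entH μ (fun ω => (A ω, Z ω)) - entH μ (fun ω => (C ω, Z ω)) := by
  set p := prX μ (fun ω => (A ω, C ω, Z ω))
  have hsplit : ∀ x, p x * logb 2 (condProdPMF μ A C Z x) =
      p x * logb 2 (prX μ (fun ω => (A ω, Z ω)) (x.1, x.2.2))
        + p x * logb 2 (prX μ (fun ω => (C ω, Z ω)) x.2) - p x * logb 2 (prX μ Z x.2.2) := by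
    intro x
    rcases (prX_nonneg μ (fun ω => (A ω, C ω, Z ω)) x).eq_or_lt with hzero | hpos
    · simp [p, ← hzero]
    obtain ⟨hA, hC, hZ⟩ := marginals_pos_of_prX_pos μ A C Z hpos
    rw [condProdPMF, logb_div (mul_pos hA hC).ne' hZ.ne', logb_mul hA.ne' hC.ne']
    ring
  have hAZ : ∑ x, p x * logb 2 (prX μ (fun ω => (A ω, Z ω)) (x.1, x.2.2)) =
      -entH μ (fun ω => (A ω, Z ω)) :=
    sum_prX_mul_logb_prX_comp μ (fun ω => (A ω, C ω, Z ω)) (fun x => (x.1, x.2.2))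
  have hCZ : ∑ x, p x * logb 2 (prX μ (fun ω => (C ω, Z ω)) x.2) =
      -entH μ (fun ω => (C ω, Z ω)) :=
    sum_prX_mul_logb_prX_comp μ (fun ω => (A ω, C ω, Z ω)) Prod.snd
  have hZ : ∑ x, p x * logb 2 (prX μ Z x.2.2) = -entH μ Z :=
    sum_prX_mul_logb_prX_comp μ (fun ω => (A ω, C ω, Z ω)) (fun x => x.2.2)
  simp only [hsplit, Finset.sum_add_distrib, Finset.sum_sub_distrib, hAZ, hCZ, hZ]
  ring

theorem entH_triple_add_entH_le :
    entH μ (fun ω => (A ω, C ω, Z ω)) + entH μ Z ≤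
      entH μ (fun ω => (A ω, Z ω)) + entH μ (fun ω => (C ω, Z ω)) := by
  have hgibbs := sum_mul_logb_le_sum_mul_logb Finset.univ one_lt_two
    (p := prX μ (fun ω => (A ω, C ω, Z ω))) (q := condProdPMF μ A C Z)
    (fun x _ => prX_nonneg μ _ x)
    (fun x _ => div_nonneg (mul_nonneg (prX_nonneg μ _ _) (prX_nonneg μ _ _)) (prX_nonneg μ _ _))
    (fun x _ hx => ?_) (by rw [sum_condProdPMF, sum_prX])
  · rw [sum_prX_mul_logb_condProdPMF, ← neg_neg (∑ x, _ * _), ← entH_eq_sum] at hgibbs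
    linarith
  · obtain ⟨hA, hC, hZ⟩ := marginals_pos_of_prX_pos μ A C Z hx
    exact div_pos (mul_pos hA hC) hZ

variable {μ A C Z} in
theorem CondIndepFun.entH_triple_add_entH (h : CondIndepFun μ A C Z) :
    entH μ (fun ω => (A ω, C ω, Z ω)) + entH μ Z =
      entH μ (fun ω => (A ω, Z ω)) + entH μ (fun ω => (C ω, Z ω)) := by
  have hcross := sum_prX_mul_logb_condProdPMF μ A C Z
  rw [← h.prX_eq_condProdPMF, ← neg_neg (∑ x, _ * _), ← entH_eq_sum] at hcross
  linarith

end CondProd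

section CondIndepFun3

variable {μ} {α₁ α₂ α₃ : Type} {X₁ : Ω → α₁} {X₂ : Ω → α₂} {X₃ : Ω → α₃} {Q : Ω → δ}

lemma CondIndepFun3.prE_mul_sq (h : CondIndepFun3 μ X₁ X₂ X₃ Q) (a b c q) :
    prE μ (fun ω => X₁ ω = a ∧ X₂ ω = b ∧ X₃ ω = c ∧ Q ω = q) * prX μ Q q ^ 2 =
      prE μ (fun ω => X₁ ω = a ∧ Q ω = q) * prE μ (fun ω => X₂ ω = b ∧ Q ω = q) *
        prE μ (fun ω => X₃ ω = c ∧ Q ω = q) := by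
  rcases (prX_nonneg μ Q q).eq_or_lt with hq | hq
  · rw [← hq, prE_eq_zero_of_prX_eq_zero μ (fun _ hω => hω.2.2.2) hq.symm,
      prE_eq_zero_of_prX_eq_zero μ (fun _ (hω : X₁ _ = a ∧ Q _ = q) => hω.2) hq.symm]
    ring
  · have := h a b c q hq
    field_simp at this
    linear_combination this

theorem CondIndepFun3.condIndepFun₂₃ [Fintype α₁] (h : CondIndepFun3 μ X₁ X₂ X₃ Q) :
    CondIndepFun μ X₂ X₃ Q := by
  refine (condIndepFun_iff μ _ _ _).2 fun b c q => ?_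
  rcases (prX_nonneg μ Q q).eq_or_lt with hq | hq
  · rw [← hq, mul_zero, prE_eq_zero_of_prX_eq_zero μ (fun _ hω => hω.2) hq.symm, zero_mul]
  refine mul_right_cancel₀ hq.ne' ?_
  calc prE μ (fun ω => X₂ ω = b ∧ X₃ ω = c ∧ Q ω = q) * prX μ Q q * prX μ Q q
      = ∑ a, prE μ (fun ω => X₁ ω = a ∧ X₂ ω = b ∧ X₃ ω = c ∧ Q ω = q) * prX μ Q q ^ 2 := by
        rw [← Finset.sum_mul, sum_prE_and]; ring
    _ = (∑ a, prE μ (fun ω => X₁ ω = a ∧ Q ω = q)) *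
          (prE μ (fun ω => X₂ ω = b ∧ Q ω = q) * prE μ (fun ω => X₃ ω = c ∧ Q ω = q)) := by
        simp only [h.prE_mul_sq, Finset.sum_mul, mul_assoc]
    _ = _ := by rw [sum_prE_and, ← prX]; ring

theorem CondIndepFun3.condIndepFun₁_prod [Fintype α₁] (h : CondIndepFun3 μ X₁ X₂ X₃ Q) :
    CondIndepFun μ X₁ (fun ω => (X₂ ω, X₃ ω)) Q := by
  refine (condIndepFun_iff μ _ _ _).2 fun a ⟨b, c⟩ q => ?_
  simp only [Prod.mk.injEq, and_assoc]
  rcases (prX_nonneg μ Q q).eq_or_lt with hq | hq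
  · rw [← hq, mul_zero, prE_eq_zero_of_prX_eq_zero μ (fun _ hω => hω.2) hq.symm, zero_mul]
  refine mul_right_cancel₀ hq.ne' ?_
  linear_combination h.prE_mul_sq a b c q -
    prE μ (fun ω => X₁ ω = a ∧ Q ω = q) * (condIndepFun_iff μ _ _ _).1 h.condIndepFun₂₃ b c q

end CondIndepFun3

end Probability

theorem second_term_ge_last_general
    {Ω 𝒬 𝒜 ℬ 𝒞 𝒮 𝒴 : Type} [Fintype 𝒬] [Fintype 𝒜] [Fintype ℬ] [Fintype 𝒞] [Fintype 𝒮]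
    [Fintype 𝒴]
    (μ : FinPMF Ω) (Q : Ω → 𝒬) (X₁₁ : Ω → 𝒜) (X₂₁ : Ω → ℬ) (X₃₁ : Ω → 𝒞)
    (h : ℬ → 𝒞 → 𝒮) (f : 𝒜 → 𝒮 → 𝒴)
    (hindep : CondIndepFun3 μ X₁₁ X₂₁ X₃₁ Q)
    (hh : OneToOne h) (hf : OneToOne f) :
    condH μ (fun ω => f (X₁₁ ω) (h (X₂₁ ω) (X₃₁ ω))) (fun ω => (X₃₁ ω, Q ω)) - condH μ X₂₁ Q ≥
      condH μ (fun ω => f (X₁₁ ω) (h (X₂₁ ω) (X₃₁ ω))) Q - condH μ (fun ω => h (X₂₁ ω) (X₃₁ ω)) Q := by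
  set S := fun ω => h (X₂₁ ω) (X₃₁ ω)
  set Y := fun ω => f (X₁₁ ω) (S ω)
  have submod_YQ := entH_triple_add_entH_le μ X₃₁ S (fun ω => (Y ω, Q ω))
  have submod_Q := entH_triple_add_entH_le μ X₁₁ S Q
  have indep₁ := hindep.condIndepFun₁_prod.entH_triple_add_entH
  have indep₂₃ := hindep.condIndepFun₂₃.entH_triple_add_entH
  have relabel_SYQ := entH_comp_left_of_injective μ hf.1 X₁₁ S Q
  have relabel_X₃SYQ := entH_comp_of_injective μ
    (g := fun p : 𝒜 × (ℬ × 𝒞) × 𝒬 => (p.2.1.2, h p.2.1.1 p.2.1.2, f p.1 (h p.2.1.1 p.2.1.2), p.2.2))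
    (by
      rintro ⟨a, ⟨b, c⟩, q⟩ ⟨a', ⟨b', c'⟩, q'⟩ e
      simp only [Prod.mk.injEq] at e
      obtain ⟨rfl, e₁, e₂, rfl⟩ := e
      obtain rfl := hh.1 c e₁
      rw [hf.1 _ e₂])
    (fun ω => (X₁₁ ω, (X₂₁ ω, X₃₁ ω), Q ω))
  simp only [condH]
  linarith [entH_prod_left_comm μ Y X₃₁ Q, entH_prod_assoc μ X₂₁ X₃₁ Q]

/-- `H(Y₁|X₃₁,Q) − H(X₂₁|Q) ≥ H(Y₁|Q) − H(S₁|Q)`. -/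
theorem second_term_ge_last
    {Ω 𝒬 𝒜 ℬ 𝒞 𝒮 𝒴 : Type} [Fintype 𝒬] [Nonempty 𝒬] [Fintype 𝒜] [Nonempty 𝒜]
    [Fintype ℬ] [Nonempty ℬ] [Fintype 𝒞] [Nonempty 𝒞] [Fintype 𝒮] [Nonempty 𝒮]
    [Fintype 𝒴] [Nonempty 𝒴]
    (μ : FinPMF Ω) (Q : Ω → 𝒬) (X₁₁ : Ω → 𝒜) (X₂₁ : Ω → ℬ) (X₃₁ : Ω → 𝒞)
    (h : ℬ → 𝒞 → 𝒮) (f : 𝒜 → 𝒮 → 𝒴)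
    (hindep : CondIndepFun3 μ X₁₁ X₂₁ X₃₁ Q)
    (hh : OneToOne h) (hf : OneToOne f) :
    condH μ (fun ω => f (X₁₁ ω) (h (X₂₁ ω) (X₃₁ ω))) (fun ω => (X₃₁ ω, Q ω)) - condH μ X₂₁ Q ≥
      condH μ (fun ω => f (X₁₁ ω) (h (X₂₁ ω) (X₃₁ ω))) Q - condH μ (fun ω => h (X₂₁ ω) (X₃₁ ω)) Q :=
  second_term_ge_last_general μ Q X₁₁ X₂₁ X₃₁ h f hindep hh hf
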